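/- arXiv:1609.03547 — 2 statements merged into one kernel-verified Lean document; each statement's English description precedes it below -/
import Mathlib

section
/- Let C be an [n,k,d]_q linear code and let H_all be the q^{n-k} × n matrix whose rows are all codewords of the dual code C⊥. Then H_all is an orthogonal array of strength d-1: for any set T of d-1 coordinates and any vector v ∈ F_q^{d-1}, exactly q^{n-k-(d-1)} rows of H_all agree with v on the coordinates T. -/
variable {F : Type} [Field F] [Fintype F] [DecidableEq F]

/-- The dual code of a linear code `C`. -/
def dualCode {ι : Type} [Fintype ι] (C : Submodule F (ι → F)) : Submodule F (ι → F) where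
  carrier := {x | ∀ c ∈ C, ∑ i, x i * c i = 0}
  add_mem' := by
    intro a b ha hb c hc
    simp only [Set.mem_setOf_eq, Pi.add_apply] at *
    simp [add_mul, Finset.sum_add_distrib, ha c hc, hb c hc]
  zero_mem' := by
    intro c hc
    simp
  smul_mem' := by
    intro a x hx c hc
    simp only [Set.mem_setOf_eq, Pi.smul_apply, smul_eq_mul, mul_assoc,
      ← Finset.mul_sum, hx c hc, mul_zero]

/-- `d` is the minimum distance of the code `D`. -/
def IsMinDist {ι : Type} [Fintype ι] (D : Submodule F (ι → F)) (d : ℕ) : Prop :=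
  (∀ c ∈ D, c ≠ 0 → d ≤ hammingNorm c) ∧ ∃ c ∈ D, c ≠ 0 ∧ hammingNorm c = d

/-- `H(S)`: delete the rows of `H` with a nonzero entry in `S`, and the columns in `S`. -/
def subMat {m n : ℕ} (H : Matrix (Fin m) (Fin n) F) (S : Finset (Fin n)) :
    Matrix {i : Fin m // ∀ j ∈ S, H i j = 0} {j : Fin n // j ∉ S} F :=
  Matrix.of fun i j => H i.1 j.1

/-!
Restriction to the coordinates `T` is a linear map `C⊥ → F^T`. It is onto: a nonzero vector of
`F^T` orthogonal to its image extends by zero to a nonzero word of `(C⊥)⊥ = C` of weight at most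
`|T| = d - 1 < d`. So every fiber is a coset of the kernel, which has dimension
`(n - k) - (d - 1)`.
-/

theorem LinearMap.natCard_fiber_of_surjective {K V W : Type*} [Field K] [Finite K]
    [AddCommGroup V] [Module K V] [Module.Finite K V] [AddCommGroup W] [Module K W]
    {f : V →ₗ[K] W} (hf : Function.Surjective f) (w : W) :
    Nat.card (f ⁻¹' {w}) = Nat.card K ^ (Module.finrank K V - Module.finrank K W) := by
  have hker : Module.finrank K (ker f) = Module.finrank K V - Module.finrank K W := by
    have := f.finrank_range_add_finrank_ker
    rw [range_eq_top.mpr hf, finrank_top] at this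
    omega
  change Nat.card (f.toAddMonoidHom ⁻¹' {w}) = _
  rw [Nat.card_congr (AddMonoidHom.fiberEquivKerOfSurjective (f := f.toAddMonoidHom) hf w),
    ← hker]
  exact Module.natCard_eq_pow_finrank (V := ker f)

variable {K : Type} [Field K]

section DualCode

variable {ι : Type} [Fintype ι]

lemma mem_dualCode {C : Submodule K (ι → K)} {x : ι → K} :
    x ∈ dualCode C ↔ ∀ c ∈ C, ∑ i, x i * c i = 0 := Iff.rfl

lemma le_dualCode_dualCode (C : Submodule K (ι → K)) : C ≤ dualCode (dualCode C) :=
  fun c hc x hx => by simpa only [mul_comm] using hx c hc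

variable [DecidableEq ι]

lemma dualCode_eq_comap_dualAnnihilator (C : Submodule K (ι → K)) :
    dualCode C = C.dualAnnihilator.comap (LinearEquiv.piRing K K ι K).symm.toLinearMap := by
  ext x
  simp [mem_dualCode, Submodule.mem_dualAnnihilator, LinearEquiv.piRing_symm_apply, mul_comm]

lemma finrank_dualCode_add_finrank (C : Submodule K (ι → K)) :
    Module.finrank K (dualCode C) + Module.finrank K C = Fintype.card ι := by
  rw [dualCode_eq_comap_dualAnnihilator, Submodule.comap_equiv_eq_map_symm,
    LinearEquiv.finrank_map_eq, ← (Subspace.quotEquivAnnihilator C).finrank_eq,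
    Submodule.finrank_quotient_add_finrank, Module.finrank_pi]

lemma dualCode_dualCode (C : Submodule K (ι → K)) : dualCode (dualCode C) = C := by
  have h₁ := finrank_dualCode_add_finrank C
  have h₂ := finrank_dualCode_add_finrank (dualCode C)
  exact (Submodule.eq_of_le_of_finrank_eq (le_dualCode_dualCode C) (by omega)).symm

lemma dualCode_ne_bot_of_ne_top {C : Submodule K (ι → K)} (hC : C ≠ ⊤) : dualCode C ≠ ⊥ := by
  have h₁ := finrank_dualCode_add_finrank C
  have h₂ := Module.finrank_pi K (ι := ι) ▸ Submodule.finrank_lt hC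
  intro h
  rw [h, finrank_bot] at h₁
  omega

end DualCode

section ExtendByZero

variable {ι : Type} [DecidableEq ι] {T : Finset ι}

def extendByZero (a : T → K) (i : ι) : K :=
  if h : i ∈ T then a ⟨i, h⟩ else 0

@[simp]
lemma extendByZero_coe (a : T → K) (j : T) : extendByZero a j = a j := by
  simp [extendByZero]

lemma sum_extendByZero_mul [Fintype ι] (a : T → K) (x : ι → K) :
    ∑ i, extendByZero a i * x i = ∑ j : T, a j * x j := by
  rw [← Finset.sum_subset (Finset.subset_univ T) fun i _ hi => by simp [extendByZero, hi],
    ← Finset.sum_coe_sort T]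
  simp

lemma extendByZero_ne_zero {a : T → K} (ha : a ≠ 0) : extendByZero a ≠ 0 := fun h =>
  ha (funext fun j => by simpa using congrFun h j)

lemma hammingNorm_extendByZero_le [Fintype ι] [DecidableEq K] (a : T → K) :
    hammingNorm (extendByZero a) ≤ T.card :=
  Finset.card_le_card fun i hi => by
    by_contra hiT
    simp [extendByZero, hiT] at hi

end ExtendByZero

def dualCodeRestrict {ι : Type} [Fintype ι] (C : Submodule K (ι → K)) (T : Finset ι) :
    dualCode C →ₗ[K] (T → K) :=
  (LinearMap.funLeft K K ((↑) : T → ι)).comp (dualCode C).subtype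

theorem dualCodeRestrict_surjective {ι : Type} [Fintype ι] [DecidableEq ι] [DecidableEq K]
    {C : Submodule K (ι → K)} {T : Finset ι}
    (hC : ∀ c ∈ C, c ≠ 0 → T.card < hammingNorm c) :
    Function.Surjective (dualCodeRestrict C T) := by
  rw [← LinearMap.range_eq_top]
  by_contra hne
  obtain ⟨a, ha, ha0⟩ := (Submodule.ne_bot_iff _).mp (dualCode_ne_bot_of_ne_top hne)
  have hmem : extendByZero a ∈ C := by
    rw [← dualCode_dualCode C]
    intro x hx
    rw [sum_extendByZero_mul]
    exact ha _ ⟨⟨x, hx⟩, rfl⟩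
  exact (hC _ hmem (extendByZero_ne_zero ha0)).not_ge (hammingNorm_extendByZero_le a)

/-- The matrix of all dual codewords is an orthogonal array of strength `d-1`. -/
theorem stmt_4 (n k d : ℕ)
    (C : Submodule F (Fin n → F)) (hk : Module.finrank F C = k) (hd : IsMinDist C d)
    (T : Finset (Fin n)) (hT : T.card = d - 1) (v : {j : Fin n // j ∈ T} → F) :
    Nat.card {x : Fin n → F // x ∈ dualCode C ∧ ∀ j : {j : Fin n // j ∈ T}, x j.1 = v j} =
      Fintype.card F ^ (n - k - (d - 1)) := by
  have hweight : ∀ c ∈ C, c ≠ 0 → T.card < hammingNorm c := by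
    obtain ⟨c₀, -, hc₀, hc₀d⟩ := hd.2
    have hd_pos : 0 < d := hc₀d ▸ hammingNorm_pos_iff.mpr hc₀
    exact fun c hc hc0 => by have := hd.1 c hc hc0; omega
  have hfiber : Nat.card {x : Fin n → F // x ∈ dualCode C ∧ ∀ j : T, x j.1 = v j} =
      Nat.card (dualCodeRestrict C T ⁻¹' {v}) :=
    Nat.card_congr ⟨fun x => ⟨⟨x.1, x.2.1⟩, funext x.2.2⟩, fun y => ⟨y.1.1, y.1.2, congrFun y.2⟩,
      fun _ => rfl, fun _ => rfl⟩
  have hdual := finrank_dualCode_add_finrank C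
  rw [hfiber, LinearMap.natCard_fiber_of_surjective (dualCodeRestrict_surjective hweight),
    Nat.card_eq_fintype_card, Module.finrank_fintype_fun_eq_card, Fintype.card_coe, hT]
  congr 1
  simp only [Fintype.card_fin] at hdual
  omega
end

section
/- Let A be a matrix whose rows lie in the dual code of an [n,k,d]_q linear code C, and let 1 ≤ l ≤ min{d, n-k} - 1. If for every S ⊆ {0,...,n-1} with |S| = l the submatrix A(S) (delete rows of A with a nonzero entry in S, then delete the columns in S) has rank n-k-l over F_q, then: (a) for every S' ⊆ {0,...,n-1} with |S'| ≤ l, rank(A(S')) = n-k-|S'|, and in particular (b) rank(A) = n-k, so A is a parity-check matrix for C. -/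
/-! For `|S| < d` the rows of `A(S)` lie in the dual of `C` punctured at `S`, which still has
dimension `k`; hence `rank A(S) ≤ n - k - |S|`. Deleting one more coordinate `x` cannot raise the
rank, and if no choice of `x` lowers it then every column of `A(S)` is zero. Going down from
`|S| = l`, induction gives `rank A(S) ≥ rank A(S ∪ {x}) = n - k - |S| - 1`, and equality here would
force `A(S) = 0`, impossible since `n - k - l ≥ 1`. At `S = ∅` this gives
`rank A = n - k = dim C⊥`. -/

variable {F : Type} [Field F] [Fintype F] [DecidableEq F]

open Module Submodule Finset

/-- The rows `r` already span the row space of `M`, and they all vanish at `j`. -/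
lemma Matrix.apply_eq_zero_of_rank_le_rank_submatrix {K m n m' n' : Type*} [Field K]
    [Finite m] [Fintype n] [Finite m'] [Fintype n'] (M : Matrix m n K) (r : m' → m)
    (c : n' → n) (j : n) (hr : ∀ i, M (r i) j = 0) (h : M.rank ≤ (M.submatrix r c).rank)
    (i : m) : M i j = 0 := by
  set N := M.submatrix r id
  have hspan : span K (Set.range N.row) = span K (Set.range M.row) := by
    refine eq_of_le_of_finrank_le (span_mono ?_) ?_
    · rintro - ⟨i, rfl⟩
      exact ⟨r i, rfl⟩
    · rw [← M.rank_eq_finrank_span_row, ← N.rank_eq_finrank_span_row]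
      exact h.trans (N.rank_submatrix_le id c)
  have hker : span K (Set.range N.row) ≤ LinearMap.ker (LinearMap.proj j) := by
    rw [span_le]
    rintro - ⟨i, rfl⟩
    exact hr i
  exact hker (hspan ▸ subset_span ⟨i, rfl⟩)

section DualCode

variable {K ι : Type} [Field K] [Fintype ι]

lemma dualCode_eq_orthogonal [DecidableEq ι] (D : Submodule K (ι → K)) :
    dualCode D = (Matrix.toBilin' (1 : Matrix ι ι K)).orthogonal D := by
  ext x
  simp [dualCode, LinearMap.BilinForm.mem_orthogonal_iff, Matrix.toBilin'_apply', dotProduct,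
    mul_comm]

lemma finrank_dualCode (D : Submodule K (ι → K)) :
    finrank K (dualCode D) = Fintype.card ι - finrank K D := by
  classical
  rw [dualCode_eq_orthogonal, LinearMap.BilinForm.finrank_orthogonal
    (LinearMap.BilinForm.nondegenerate_toBilin'_of_det_ne_zero' _ (by simp)),
    finrank_fintype_fun_eq_card]

lemma span_eq_dualCode_of_finrank {C : Submodule K (ι → K)} {s : Set (ι → K)}
    (hs : s ⊆ dualCode C) (h : Fintype.card ι - finrank K C ≤ finrank K (span K s)) :
    span K s = dualCode C :=
  eq_of_le_of_finrank_le (span_le.mpr hs) (finrank_dualCode C ▸ h)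

def puncture (C : Submodule K (ι → K)) (S : Finset ι) : Submodule K ({j // j ∉ S} → K) :=
  C.map (LinearMap.funLeft K K Subtype.val)

lemma finrank_puncture_of_card_lt [DecidableEq K] {C : Submodule K (ι → K)} {d : ℕ}
    (hd : ∀ c ∈ C, c ≠ 0 → d ≤ hammingNorm c) {S : Finset ι} (hS : S.card < d) :
    finrank K (puncture C S) = finrank K C := by
  set f : (ι → K) →ₗ[K] ({j // j ∉ S} → K) := LinearMap.funLeft K K Subtype.val
  have hinj : Function.Injective (f ∘ₗ C.subtype) := by
    refine (injective_iff_map_eq_zero _).mpr fun c hc => ?_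
    by_contra hne
    have hsupp : hammingNorm (c : ι → K) ≤ S.card := by
      refine card_le_card fun i hi => ?_
      by_contra hiS
      exact (mem_filter.mp hi).2 (congrFun hc ⟨i, hiS⟩)
    exact absurd (hd c c.2 fun h => hne (Subtype.ext h)) (by omega)
  rw [puncture, ← LinearMap.finrank_range_of_inj hinj, LinearMap.range_comp, range_subtype]

end DualCode

section SubMat

variable {K : Type} [Field K] {m n : ℕ} (A : Matrix (Fin m) (Fin n) K)

lemma rank_subMat_empty : (subMat A ∅).rank = A.rank := by
  have : subMat A ∅ = A.submatrix (Equiv.subtypeUnivEquiv fun _ _ h => absurd h (notMem_empty _))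
      (Equiv.subtypeUnivEquiv fun j => notMem_empty j) := rfl
  rw [this, Matrix.rank_submatrix]

lemma subMat_insert (S : Finset (Fin n)) (x : Fin n) :
    subMat A (insert x S) = (subMat A S).submatrix
      (fun i => ⟨i.1, fun j hj => i.2 j (mem_insert_of_mem hj)⟩)
      (fun j => ⟨j.1, fun h => j.2 (mem_insert_of_mem h)⟩) :=
  rfl

lemma rank_subMat_insert_le (S : Finset (Fin n)) (x : Fin n) :
    (subMat A (insert x S)).rank ≤ (subMat A S).rank := by
  rw [subMat_insert A S x]
  exact Matrix.rank_submatrix_le (subMat A S) _ _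

lemma subMat_eq_zero_of_rank_insert {S : Finset (Fin n)}
    (h : ∀ x ∉ S, (subMat A S).rank ≤ (subMat A (insert x S)).rank) : subMat A S = 0 :=
  Matrix.ext fun i x => by
    have hx := h x.1 x.2
    rw [subMat_insert] at hx
    exact (subMat A S).apply_eq_zero_of_rank_le_rank_submatrix _ _ x
      (fun i' => i'.2 x.1 (mem_insert_self x.1 S)) hx i

lemma subMat_row_mem_dualCode_puncture {C : Submodule K (Fin n → K)}
    (hA : ∀ i, A i ∈ dualCode C) (S : Finset (Fin n)) (i) :
    (subMat A S).row i ∈ dualCode (puncture C S) := by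
  rintro - ⟨c, hc, rfl⟩
  calc ∑ j : {j // j ∉ S}, A i j * c j = ∑ j ∈ Sᶜ, A i j * c j :=
        (sum_subtype Sᶜ (fun _ => mem_compl) fun j => A i j * c j).symm
    _ = ∑ j, A i j * c j :=
        sum_subset (subset_univ _) fun j _ hj => by rw [i.2 j (by simpa using hj), zero_mul]
    _ = 0 := hA i c hc

lemma rank_subMat_le_of_card_lt [DecidableEq K] {C : Submodule K (Fin n → K)} {d : ℕ}
    (hd : ∀ c ∈ C, c ≠ 0 → d ≤ hammingNorm c) (hA : ∀ i, A i ∈ dualCode C)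
    {S : Finset (Fin n)} (hS : S.card < d) :
    (subMat A S).rank ≤ n - S.card - finrank K C :=
  calc (subMat A S).rank = finrank K (span K (Set.range (subMat A S).row)) :=
        (subMat A S).rank_eq_finrank_span_row
    _ ≤ finrank K (dualCode (puncture C S)) := by
        refine finrank_mono (span_le.mpr ?_)
        rintro - ⟨i, rfl⟩
        exact subMat_row_mem_dualCode_puncture A hA S i
    _ = n - S.card - finrank K C := by
        rw [finrank_dualCode, finrank_puncture_of_card_lt hd hS, Fintype.card_subtype_compl,
          Fintype.card_fin, Fintype.card_coe]

lemma rank_subMat_eq_sub_card {e l : ℕ} (hle : l < e) (he : e ≤ n)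
    (hupper : ∀ S : Finset (Fin n), S.card < l → (subMat A S).rank ≤ e - S.card)
    (hbase : ∀ S : Finset (Fin n), S.card = l → (subMat A S).rank = e - l)
    (S : Finset (Fin n)) (hS : S.card ≤ l) : (subMat A S).rank = e - S.card := by
  refine strongDownwardInductionOn S (fun T ih hT => ?_) hS
  obtain hlt | heq := hT.lt_or_eq
  swap
  · rw [heq]
    exact hbase T heq
  have hinsert : ∀ x ∉ T, (subMat A (insert x T)).rank = e - (T.card + 1) := fun x hx => by
    rw [← card_insert_of_notMem hx]
    exact ih (by rw [card_insert_of_notMem hx]; omega) (ssubset_insert hx)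
  obtain ⟨x, -, hx⟩ := exists_mem_notMem_of_card_lt_card (s := T) (t := univ)
    (by rw [card_univ, Fintype.card_fin]; omega)
  by_contra hne
  have hdrop : (subMat A T).rank = e - (T.card + 1) := by
    have := rank_subMat_insert_le A T x
    have := hinsert x hx
    have := hupper T hlt
    omega
  have hzero := subMat_eq_zero_of_rank_insert A fun y hy => (hdrop.trans (hinsert y hy).symm).le
  rw [hzero, Matrix.rank_zero] at hdrop
  omega

end SubMat

/-- If a matrix `A` with rows in `C⊥` satisfies `rank A(S) = n-k-l` for every `l`-subset `S`,
then `rank A(S') = n-k-|S'|` for every subset `S'` of size at most `l`, and `A` has rank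
`n-k`, i.e. `A` is a parity-check matrix for `C`. -/
theorem stmt_9 (n k d l mrows : ℕ)
    (C : Submodule F (Fin n → F)) (hk : Module.finrank F C = k) (hd : IsMinDist C d)
    (hl1 : 1 ≤ l) (hl : l ≤ min d (n - k) - 1)
    (A : Matrix (Fin mrows) (Fin n) F) (hA : ∀ i, A i ∈ dualCode C)
    (hsep : ∀ S : Finset (Fin n), S.card = l → (subMat A S).rank = n - k - l) :
    (∀ S' : Finset (Fin n), S'.card ≤ l → (subMat A S').rank = n - k - S'.card) ∧
      A.rank = n - k ∧
      Submodule.span F (Set.range fun i => A i) = dualCode C := by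
  have hrank : ∀ S : Finset (Fin n), S.card ≤ l → (subMat A S).rank = n - k - S.card := by
    refine rank_subMat_eq_sub_card A (by omega) (by omega) (fun S hS => ?_) hsep
    have hupper := rank_subMat_le_of_card_lt A hd.1 hA (S := S) (by omega)
    omega
  have hArank : A.rank = n - k := by
    simpa [rank_subMat_empty] using hrank ∅ (by simp)
  refine ⟨hrank, hArank, span_eq_dualCode_of_finrank (by rintro - ⟨i, rfl⟩; exact hA i) ?_⟩
  rw [Fintype.card_fin, hk, ← hArank, A.rank_eq_finrank_span_row]
  rfl
end
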